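/- arXiv:2605.07120 — 5 statements merged into one kernel-verified Lean document; each statement's English description precedes it below -/
import Mathlib

section
/- Let I be a finite index set partitioned as I = I_1 ⊔ ⋯ ⊔ I_m, and let (X_α)_{α ∈ I} be real random variables with |X_α| ≤ L almost surely, such that for each q the family {X_α : α ∈ I_q} is jointly independent. Set S = ∑_{α ∈ I} (X_α − E X_α) and V = ∑_{α ∈ I} Var(X_α). Then for every u > 0, P( |S| > √(2·m·V·u) + (4/3)·m·L·u ) ≤ 2·e^{−u}. -/
/-!
Split the centred sum by colour, `S = T₁ + ⋯ + Tₘ`. Each `T_q` is a sum of independent centred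
variables bounded by `2L`, so Bernstein's estimate `eᶻ ≤ 1 + z + z² / (2 (1 - z/3))` (for `z < 3`)
gives `E e^{τ T_q} ≤ exp (τ² V_q / (2 (1 - 2τL/3)))`. Hölder's inequality with `m` equal exponents,
`E ∏_q e^{t T_q} ≤ ∏_q (E e^{m t T_q})^{1/m}`, turns these into the sub-gamma bound
`E e^{t S} ≤ exp (m V t² / (2 (1 - c t)))` with `c = 2mL/3`, and the Chernoff bound at a suitable
`t` gives the upper tail. Applying this to `-X` gives the lower tail.
-/

open MeasureTheory ProbabilityTheory Real

lemma nonneg_of_hasDerivAt_of_monotone {f f' : ℝ → ℝ} (hf : ∀ x, HasDerivAt f (f' x) x)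
    (hf' : Monotone f') (h0 : f 0 = 0) (h0' : f' 0 = 0) (x : ℝ) : 0 ≤ f x := by
  have hcont : Continuous f := continuous_iff_continuousAt.2 fun y => (hf y).continuousAt
  rcases lt_trichotomy x 0 with hx | rfl | hx
  · obtain ⟨ξ, hξ, hslope⟩ :=
      exists_hasDerivAt_eq_slope f f' hx hcont.continuousOn fun y _ => hf y
    rw [eq_div_iff (by linarith)] at hslope
    nlinarith [h0' ▸ hf' hξ.2.le]
  · exact h0.ge
  · obtain ⟨ξ, hξ, hslope⟩ :=
      exists_hasDerivAt_eq_slope f f' hx hcont.continuousOn fun y _ => hf y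
    rw [eq_div_iff (by linarith)] at hslope
    nlinarith [h0' ▸ hf' hξ.1.le]

lemma Real.exp_le_one_add_add_sq_div {z : ℝ} (hz : z < 3) :
    exp z ≤ 1 + z + z ^ 2 / (2 * (1 - z / 3)) := by
  -- Equivalently `(6 - 2z) eᶻ ≤ z² + 4z + 6`: the difference vanishes to second order at `0`
  -- and has increasing derivative.
  have hf'' (y : ℝ) : HasDerivAt (fun y => 2 * y + 4 - (4 - 2 * y) * exp y)
      (2 - (2 - 2 * y) * exp y) y :=
    ((((hasDerivAt_id' y).const_mul 2).add_const 4).sub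
      ((((hasDerivAt_id' y).const_mul 2).const_sub 4).mul (hasDerivAt_exp y))).congr_deriv
        (by ring)
  have hf' (y : ℝ) : HasDerivAt (fun y => y ^ 2 + 4 * y + 6 - (6 - 2 * y) * exp y)
      (2 * y + 4 - (4 - 2 * y) * exp y) y :=
    ((((hasDerivAt_pow 2 y).add ((hasDerivAt_id' y).const_mul 4)).add_const 6).sub
      ((((hasDerivAt_id' y).const_mul 2).const_sub 6).mul (hasDerivAt_exp y))).congr_deriv
        (by ring)
  -- the second derivative is nonnegative because `(1 - y) eʸ ≤ 1`
  have hf'_mono : Monotone fun y => 2 * y + 4 - (4 - 2 * y) * exp y := by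
    refine monotone_of_hasDerivAt_nonneg hf'' fun y => ?_
    have := mul_le_mul_of_nonneg_right (add_one_le_exp (-y)) (exp_pos y).le
    rw [← exp_add, neg_add_cancel, exp_zero] at this
    simp only [Pi.zero_apply]
    linarith
  have key := nonneg_of_hasDerivAt_of_monotone hf' hf'_mono (by simp) (by simp) z
  have hd : 0 < 2 * (1 - z / 3) := by linarith
  have : exp z - 1 - z ≤ z ^ 2 / (2 * (1 - z / 3)) := by
    rw [le_div_iff₀ hd]; nlinarith
  linarith

lemma bernstein_exponent_le {r c u : ℝ} (hr : 0 ≤ r) (hc : 0 < c) (hu : 0 ≤ u) :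
    -(r + 2 * c)⁻¹ * (2 * u * r + 2 * c * u) +
      2 * u * r ^ 2 * ((r + 2 * c)⁻¹) ^ 2 / (2 * (1 - c * (r + 2 * c)⁻¹)) ≤ -u := by
  have h1 : 0 < r + c := by linarith
  have h2 : 0 < r + 2 * c := by linarith
  have hd : 1 - c * (r + 2 * c)⁻¹ = (r + c) / (r + 2 * c) := by field_simp; ring
  rw [hd]
  field_simp
  nlinarith [mul_nonneg (mul_nonneg hr hc.le) hu]

namespace ProbabilityTheory

variable {Ω : Type*} [MeasurableSpace Ω] {μ : Measure Ω}

lemma integrable_exp_mul_of_abs_le_const [IsFiniteMeasure μ] {Y : Ω → ℝ}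
    (hY : AEMeasurable Y μ) {b : ℝ} (hbdd : ∀ᵐ ω ∂μ, |Y ω| ≤ b) (t : ℝ) :
    Integrable (fun ω => exp (t * Y ω)) μ :=
  integrable_exp_mul_of_mem_Icc hY (hbdd.mono fun _ h => abs_le.1 h)

lemma ae_abs_sub_integral_le [IsProbabilityMeasure μ] {X : Ω → ℝ} {L : ℝ}
    (hbdd : ∀ᵐ ω ∂μ, |X ω| ≤ L) : ∀ᵐ ω ∂μ, |X ω - μ[X]| ≤ 2 * L := by
  have hmean : |μ[X]| ≤ L := by
    simpa using norm_integral_le_of_norm_le_const (μ := μ) (f := X) (by simpa using hbdd)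
  filter_upwards [hbdd] with ω hω
  linarith [abs_sub (X ω) (μ[X])]

lemma mgf_le_exp_of_abs_le [IsProbabilityMeasure μ] {Y : Ω → ℝ} (hY : AEMeasurable Y μ)
    {b t : ℝ} (hbdd : ∀ᵐ ω ∂μ, |Y ω| ≤ b) (hmean : μ[Y] = 0) (ht : 0 ≤ t) (htb : t * b < 3) :
    mgf Y μ t ≤ exp (t ^ 2 * variance Y μ / (2 * (1 - t * b / 3))) := by
  have hd : 0 < 2 * (1 - t * b / 3) := by linarith
  set k := t ^ 2 / (2 * (1 - t * b / 3))
  have hYmem : MemLp Y ⊤ μ := memLp_top_of_bound hY.aestronglyMeasurable b hbdd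
  have hvar : variance Y μ = ∫ ω, Y ω ^ 2 ∂μ := by simp [variance_eq_integral hY, hmean]
  have hpoint : ∀ᵐ ω ∂μ, exp (t * Y ω) ≤ 1 + t * Y ω + k * Y ω ^ 2 := by
    filter_upwards [hbdd] with ω hω
    have htY : t * Y ω ≤ t * b := mul_le_mul_of_nonneg_left ((le_abs_self _).trans hω) ht
    calc exp (t * Y ω) ≤ 1 + t * Y ω + (t * Y ω) ^ 2 / (2 * (1 - t * Y ω / 3)) :=
          exp_le_one_add_add_sq_div (htY.trans_lt htb)
      _ ≤ 1 + t * Y ω + (t * Y ω) ^ 2 / (2 * (1 - t * b / 3)) := by gcongr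
      _ = 1 + t * Y ω + k * Y ω ^ 2 := by ring
  have hlin : Integrable (fun ω => t * Y ω) μ := (hYmem.integrable le_top).const_mul t
  have hsq : Integrable (fun ω => k * Y ω ^ 2) μ :=
    (hYmem.mono_exponent le_top).integrable_sq.const_mul k
  have haff : Integrable (fun ω => 1 + t * Y ω) μ := (integrable_const 1).add hlin
  calc mgf Y μ t ≤ ∫ ω, (1 + t * Y ω + k * Y ω ^ 2) ∂μ :=
        integral_mono_ae (integrable_exp_mul_of_abs_le_const hY hbdd t) (haff.add hsq) hpoint
    _ = 1 + k * variance Y μ := by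
        rw [integral_add haff hsq,
          integral_add (integrable_const 1) hlin, integral_const_mul, integral_const_mul, hvar]
        simp [hmean]
    _ ≤ exp (k * variance Y μ) := by linarith [add_one_le_exp (k * variance Y μ)]
    _ = exp (t ^ 2 * variance Y μ / (2 * (1 - t * b / 3))) := by
        congr 1; simp only [k]; ring

lemma iIndepFun.mgf_sum_le_exp [IsProbabilityMeasure μ] {ι : Type*} [Fintype ι]
    {Y : ι → Ω → ℝ} (hindep : iIndepFun Y μ) (hY : ∀ i, AEMeasurable (Y i) μ) {b t : ℝ}
    (hbdd : ∀ i, ∀ᵐ ω ∂μ, |Y i ω| ≤ b) (hmean : ∀ i, μ[Y i] = 0) (ht : 0 ≤ t)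
    (htb : t * b < 3) :
    mgf (∑ i, Y i) μ t ≤ exp (t ^ 2 * (∑ i, variance (Y i) μ) / (2 * (1 - t * b / 3))) := by
  rw [hindep.mgf_sum₀ hY, Finset.mul_sum, Finset.sum_div, exp_sum]
  exact Finset.prod_le_prod (fun _ _ => mgf_nonneg)
    fun i _ => mgf_le_exp_of_abs_le (hY i) (hbdd i) (hmean i) ht htb

-- Hölder's inequality with the `card κ` exponents all equal to `1 / card κ`.
lemma mgf_sum_le_exp_of_mgf_le {κ : Type*} [Fintype κ] [Nonempty κ] {T : κ → Ω → ℝ}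
    (hT : ∀ q, AEMeasurable (T q) μ) {t : ℝ} {a : κ → ℝ}
    (hint : ∀ q, Integrable (fun ω => exp (Fintype.card κ * t * T q ω)) μ)
    (hmgf : ∀ q, mgf (T q) μ (Fintype.card κ * t) ≤ exp (a q)) :
    mgf (∑ q, T q) μ t ≤ exp ((∑ q, a q) / Fintype.card κ) := by
  set n : ℝ := (Fintype.card κ : ℝ)
  have hn : 0 < n := by positivity
  have hpow (x : ℝ) : ENNReal.ofReal (exp x) ^ n⁻¹ = ENNReal.ofReal (exp (x / n)) := by
    rw [ENNReal.ofReal_rpow_of_pos (exp_pos x), ← exp_mul, div_eq_mul_inv]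
  have hsplit (ω : Ω) : ENNReal.ofReal (exp (t * (∑ q, T q) ω)) =
      ∏ q, ENNReal.ofReal (exp (n * t * T q ω)) ^ n⁻¹ := by
    simp only [hpow, Finset.sum_apply]
    rw [← ENNReal.ofReal_prod_of_nonneg fun _ _ => (exp_pos _).le, ← exp_sum]
    congr 2
    rw [Finset.mul_sum]
    exact Finset.sum_congr rfl fun q _ => by field_simp
  have hholder : ∫⁻ ω, ENNReal.ofReal (exp (t * (∑ q, T q) ω)) ∂μ ≤
      ENNReal.ofReal (exp ((∑ q, a q) / n)) := by
    calc ∫⁻ ω, ENNReal.ofReal (exp (t * (∑ q, T q) ω)) ∂μ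
        = ∫⁻ ω, ∏ q, ENNReal.ofReal (exp (n * t * T q ω)) ^ n⁻¹ ∂μ := by simp only [hsplit]
      _ ≤ ∏ q, (∫⁻ ω, ENNReal.ofReal (exp (n * t * T q ω)) ∂μ) ^ n⁻¹ :=
        ENNReal.lintegral_prod_norm_pow_le _
          (fun q _ => ENNReal.measurable_ofReal.comp_aemeasurable
            (measurable_exp.comp_aemeasurable ((hT q).const_mul _)))
          (by simp [Finset.card_univ, n, hn.ne']) fun _ _ => by positivity
      _ = ∏ q, ENNReal.ofReal (mgf (T q) μ (n * t)) ^ n⁻¹ := by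
        simp only [mgf, ofReal_integral_eq_lintegral_ofReal (hint _)
          (ae_of_all _ fun _ => (exp_pos _).le)]
      _ ≤ ∏ q, ENNReal.ofReal (exp (a q)) ^ n⁻¹ := by
        gcongr with q
        exact hmgf q
      _ = ENNReal.ofReal (exp ((∑ q, a q) / n)) := by
        simp only [hpow]
        rw [← ENNReal.ofReal_prod_of_nonneg fun _ _ => (exp_pos _).le, ← exp_sum,
          Finset.sum_div]
  rw [mgf, integral_eq_lintegral_of_nonneg_ae (ae_of_all _ fun _ => (exp_pos _).le)
    (measurable_exp.comp_aemeasurable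
      ((Finset.aemeasurable_sum _ fun q _ => hT q).const_mul t)).aestronglyMeasurable]
  exact ENNReal.toReal_le_of_le_ofReal (exp_pos _).le hholder

lemma measureReal_ge_le_exp_of_mgf_le [IsFiniteMeasure μ] {S : Ω → ℝ} {a c u : ℝ}
    (ha : 0 ≤ a) (hc : 0 < c) (hu : 0 < u) (hint : ∀ t, Integrable (fun ω => exp (t * S ω)) μ)
    (hmgf : ∀ t, 0 ≤ t → c * t < 1 → mgf S μ t ≤ exp (a * t ^ 2 / (2 * (1 - c * t)))) :
    μ.real {ω | √(2 * a * u) + 2 * c * u ≤ S ω} ≤ exp (-u) := by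
  -- Chernoff at `t = 1 / (r + 2c)`, where `a = 2 u r²`; unlike `1 / (r + c)`, this choice
  -- keeps `c t < 1` when `a = 0`.
  set r := √(a / (2 * u))
  have hr : 0 ≤ r := sqrt_nonneg _
  have ha_eq : a = 2 * u * r ^ 2 := by rw [sq_sqrt (by positivity)]; field_simp
  have hsqrt : √(2 * a * u) = 2 * u * r := by
    rw [ha_eq, show 2 * (2 * u * r ^ 2) * u = (2 * u * r) ^ 2 by ring, sqrt_sq (by positivity)]
  set t := (r + 2 * c)⁻¹
  have ht : 0 ≤ t := by positivity
  have hct : c * t < 1 := by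
    rw [mul_inv_lt_iff₀ (by positivity)]; linarith
  calc μ.real {ω | √(2 * a * u) + 2 * c * u ≤ S ω}
      ≤ exp (-t * (√(2 * a * u) + 2 * c * u)) * mgf S μ t :=
        measure_ge_le_exp_mul_mgf _ ht (hint t)
    _ ≤ exp (-t * (√(2 * a * u) + 2 * c * u)) * exp (a * t ^ 2 / (2 * (1 - c * t))) := by
        gcongr; exact hmgf t ht hct
    _ ≤ exp (-u) := by
        rw [← exp_add, exp_le_exp, hsqrt, ha_eq]
        exact bernstein_exponent_le hr hc hu.le

section Fibers

variable [IsProbabilityMeasure μ] {ι κ : Type*} [Fintype ι] [Fintype κ] [Nonempty κ]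
  (part : ι → κ) {Y : ι → Ω → ℝ} {b u : ℝ}

lemma mgf_sum_le_exp_of_iIndepFun_fibers (hY : ∀ i, Measurable (Y i))
    (hindep : ∀ q, iIndepFun (fun i : {i // part i = q} => Y i.1) μ) {t : ℝ}
    (hbdd : ∀ i, ∀ᵐ ω ∂μ, |Y i ω| ≤ b) (hmean : ∀ i, μ[Y i] = 0) (ht : 0 ≤ t)
    (htb : Fintype.card κ * t * b < 3) :
    mgf (∑ i, Y i) μ t ≤ exp (Fintype.card κ * (∑ i, variance (Y i) μ) * t ^ 2 /
      (2 * (1 - Fintype.card κ * t * b / 3))) := by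
  classical
  set T : κ → Ω → ℝ := fun q => ∑ i : {i // part i = q}, Y i
  have hT (q : κ) : Measurable (T q) := by fun_prop
  have hint (q : κ) : Integrable (fun ω => exp (Fintype.card κ * t * T q ω)) μ :=
    (hindep q).integrable_exp_mul_sum (fun i => hY i) fun i _ =>
      integrable_exp_mul_of_abs_le_const (hY i).aemeasurable (hbdd i) _
  rw [← Fintype.sum_fiberwise part Y]
  refine (mgf_sum_le_exp_of_mgf_le (fun q => (hT q).aemeasurable) hint fun q =>
    (hindep q).mgf_sum_le_exp (fun i => (hY i).aemeasurable) (fun i => hbdd i)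
      (fun i => hmean i) (by positivity) htb).trans_eq ?_
  rw [← Fintype.sum_fiberwise part fun i => variance (Y i) μ, ← Finset.sum_div,
    ← Finset.mul_sum]
  congr 1
  field_simp

lemma measureReal_sum_ge_le_of_iIndepFun_fibers (hY : ∀ i, Measurable (Y i))
    (hindep : ∀ q, iIndepFun (fun i : {i // part i = q} => Y i.1) μ)
    (hbdd : ∀ i, ∀ᵐ ω ∂μ, |Y i ω| ≤ b) (hmean : ∀ i, μ[Y i] = 0) (hb : 0 < b) (hu : 0 < u) :
    μ.real {ω | √(2 * Fintype.card κ * (∑ i, variance (Y i) μ) * u) +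
      2 / 3 * Fintype.card κ * b * u ≤ ∑ i, Y i ω} ≤ exp (-u) := by
  have hsum_bdd : ∀ᵐ ω ∂μ, |(∑ i, Y i) ω| ≤ ∑ _i : ι, b := by
    filter_upwards [ae_all_iff.2 hbdd] with ω hω
    rw [Finset.sum_apply]
    exact (Finset.abs_sum_le_sum_abs _ _).trans (Finset.sum_le_sum fun i _ => hω i)
  have h := measureReal_ge_le_exp_of_mgf_le (μ := μ) (S := ∑ i, Y i)
    (a := Fintype.card κ * ∑ i, variance (Y i) μ) (c := Fintype.card κ * b / 3)
    (mul_nonneg (by positivity) (Finset.sum_nonneg fun i _ => variance_nonneg (Y i) μ))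
    (by positivity) hu
    (integrable_exp_mul_of_abs_le_const (by fun_prop) hsum_bdd) fun t ht hct =>
      (mgf_sum_le_exp_of_iIndepFun_fibers part hY hindep hbdd hmean ht (by linarith)).trans_eq
        (by ring_nf)
  simp only [Finset.sum_apply] at h
  convert h using 5
  ring_nf

lemma measureReal_abs_sum_gt_le_of_iIndepFun_fibers (hY : ∀ i, Measurable (Y i))
    (hindep : ∀ q, iIndepFun (fun i : {i // part i = q} => Y i.1) μ)
    (hbdd : ∀ i, ∀ᵐ ω ∂μ, |Y i ω| ≤ b) (hmean : ∀ i, μ[Y i] = 0) (hb : 0 < b) (hu : 0 < u) :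
    μ.real {ω | √(2 * Fintype.card κ * (∑ i, variance (Y i) μ) * u) +
      2 / 3 * Fintype.card κ * b * u < |∑ i, Y i ω|} ≤ 2 * exp (-u) := by
  set ε := √(2 * Fintype.card κ * (∑ i, variance (Y i) μ) * u) + 2 / 3 * Fintype.card κ * b * u
  have hupper := measureReal_sum_ge_le_of_iIndepFun_fibers part hY hindep hbdd hmean hb hu
  have hlower : μ.real {ω | ε ≤ -∑ i, Y i ω} ≤ exp (-u) := by
    have h := measureReal_sum_ge_le_of_iIndepFun_fibers part (Y := fun i => -Y i)
      (fun i => (hY i).neg) (fun q => (hindep q).comp (fun _ => Neg.neg) fun _ => measurable_neg)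
      (fun i => by simpa only [Pi.neg_apply, abs_neg] using hbdd i)
      (fun i => by rw [integral_neg', hmean i, neg_zero]) hb hu
    simpa only [variance_neg, Pi.neg_apply, Finset.sum_neg_distrib] using h
  calc μ.real {ω | ε < |∑ i, Y i ω|}
      ≤ μ.real ({ω | ε ≤ ∑ i, Y i ω} ∪ {ω | ε ≤ -∑ i, Y i ω}) := by
        refine measureReal_mono fun ω hω => ?_
        replace hω : ε < |∑ i, Y i ω| := hω
        rcases le_total 0 (∑ i, Y i ω) with h | h
        · exact Or.inl (abs_of_nonneg h ▸ hω).le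
        · exact Or.inr (abs_of_nonpos h ▸ hω).le
    _ ≤ exp (-u) + exp (-u) := (measureReal_union_le _ _).trans (add_le_add hupper hlower)
    _ = 2 * exp (-u) := by ring

end Fibers

end ProbabilityTheory

/-- Colored Bernstein inequality: if a finite family of bounded random variables is
partitioned into `m` classes, each class jointly independent, then the centered sum
`S = ∑_α (X_α − E X_α)` satisfies, for every `u > 0`,
`P( |S| > √(2·m·V·u) + (4/3)·m·L·u ) ≤ 2·e^{−u}`, where `V = ∑_α Var(X_α)`. -/
theorem colored_bernstein
    {Ω : Type*} [MeasurableSpace Ω] (μ : Measure Ω) [IsProbabilityMeasure μ]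
    {ι : Type*} [Fintype ι] (m : ℕ) (hm : 0 < m)
    (part : ι → Fin m)
    (X : ι → Ω → ℝ) (hXmeas : ∀ α, Measurable (X α))
    (L : ℝ) (hL : 0 < L)
    (hbdd : ∀ α, ∀ᵐ ω ∂μ, |X α ω| ≤ L)
    (hindep : ∀ q : Fin m,
      iIndepFun
        (fun α : {a : ι // part a = q} => X α.1) μ)
    (V : ℝ) (hV : V = ∑ α, variance (X α) μ)
    (u : ℝ) (hu : 0 < u) :
    μ {ω | Real.sqrt (2 * m * V * u) + (4 / 3) * m * L * u <
        |∑ α, (X α ω - ∫ ω', X α ω' ∂μ)|} ≤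
      ENNReal.ofReal (2 * Real.exp (-u)) := by
  have : NeZero m := ⟨hm.ne'⟩
  have hXint (α : ι) : Integrable (X α) μ :=
    .of_bound (hXmeas α).aestronglyMeasurable L (by simpa using hbdd α)
  have h := measureReal_abs_sum_gt_le_of_iIndepFun_fibers part
    (Y := fun α ω => X α ω - ∫ ω', X α ω' ∂μ) (b := 2 * L) (fun α => (hXmeas α).sub_const _)
    (fun q => (hindep q).comp (fun α x => x - ∫ ω', X α.1 ω' ∂μ)
      fun _ => measurable_id.sub_const _)
    (fun α => ae_abs_sub_integral_le (hbdd α))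
    (fun α => by simp [integral_sub (hXint α) (integrable_const _)]) (by positivity) hu
  simp only [variance_sub_const (hXmeas _).aestronglyMeasurable, ← hV, Fintype.card_fin] at h
  rw [ENNReal.le_ofReal_iff_toReal_le (measure_ne_top μ _) (by positivity), ← measureReal_def]
  convert h using 5
  ring
end

section
/- Let I be a finite nonempty index set partitioned as I = I_1 ⊔ ⋯ ⊔ I_m, and let (B_α)_{α ∈ I} be {0,1}-valued random variables with P(B_α = 1) ≤ q for a fixed q ∈ (0,1), such that within each class I_s the variables {B_α : α ∈ I_s} are jointly independent. Put P = |I|, N_eff = P/m, and B̄ = (1/P)·∑_{α ∈ I} B_α. Then for every p ∈ [q, 1], P( B̄ ≥ p ) ≤ exp( −N_eff · D_B(p‖q) ). -/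
/-!
Chernoff's method with parameter `l / m`. Within a class the variables are independent, so the
class sum `S_s` satisfies `E exp (l S_s) ≤ (1 - q + q e^l) ^ |I_s|`. Nothing is known across
classes, but `exp ((l / m) ∑_s S_s)` is the geometric mean of the `exp (l S_s)`, so Hölder's
inequality with all exponents equal to `m` bounds its expectation by `(1 - q + q e^l) ^ (|I| / m)`.
Choosing `l` as the log odds ratio of `p` against `q` (or letting `l → ∞` when `p = 1`) turns the
resulting exponent into `-N_eff · D_B(p‖q)`.
-/

open MeasureTheory ProbabilityTheory

/-- Binary relative entropy `D_B(p‖q) = p·log(p/q) + (1−p)·log((1−p)/(1−q))`.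
With Lean's convention `Real.log 0 = 0` this agrees with the continuous extension
at the endpoints (in particular `D_B(1‖q) = log(1/q)`). -/
noncomputable def binKL (p q : ℝ) : ℝ :=
  p * Real.log (p / q) + (1 - p) * Real.log ((1 - p) / (1 - q))


open Real Filter Topology
open scoped ENNReal

noncomputable def bernoulliCGF (q t : ℝ) : ℝ := log (1 - q + q * exp t)

lemma log_odds_ratio_nonneg {p q : ℝ} (hq : 0 < q) (hqp : q ≤ p) (hp : p < 1) :
    0 ≤ log (p * (1 - q) / (q * (1 - p))) := by
  refine log_nonneg ((one_le_div (by nlinarith)).2 ?_)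
  nlinarith

/-- The log odds ratio is where `l ↦ l * p - bernoulliCGF q l` attains its maximum. -/
lemma bernoulliCGF_log_odds_ratio_sub {p q : ℝ} (hq : q ∈ Set.Ioo 0 1) (hp : p ∈ Set.Ioo 0 1) :
    bernoulliCGF q (log (p * (1 - q) / (q * (1 - p)))) -
      log (p * (1 - q) / (q * (1 - p))) * p = -binKL p q := by
  obtain ⟨hq0, hq1⟩ := hq
  obtain ⟨hp0, hp1⟩ := hp
  have h1q : 1 - q ≠ 0 := by linarith
  have h1p : 1 - p ≠ 0 := by linarith
  have hK : 1 - q + q * (p * (1 - q) / (q * (1 - p))) = (1 - q) / (1 - p) := by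
    field_simp
    ring
  rw [bernoulliCGF, exp_log (by positivity), hK, binKL, log_div h1q h1p,
    log_div (by positivity) (by positivity), log_mul hp0.ne' h1q, log_mul hq0.ne' h1p,
    log_div hp0.ne' hq0.ne', log_div h1p h1q]
  ring

lemma binKL_one_left (q : ℝ) : binKL 1 q = -log q := by
  simp [binKL, log_inv]

lemma tendsto_bernoulliCGF_sub_atTop {q : ℝ} (hq0 : 0 < q) (hq1 : q ≤ 1) :
    Tendsto (fun l => bernoulliCGF q l - l) atTop (𝓝 (log q)) := by
  have hshift : ∀ l, bernoulliCGF q l - l = log ((1 - q) * exp (-l) + q) := by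
    intro l
    have hpos : 0 < 1 - q + q * exp l := by nlinarith [exp_pos l]
    rw [show (1 - q) * exp (-l) + q = (1 - q + q * exp l) / exp l by rw [exp_neg]; field_simp,
      log_div hpos.ne' (exp_pos l).ne', log_exp, bernoulliCGF]
  have hlim : Tendsto (fun l => (1 - q) * exp (-l) + q) atTop (𝓝 q) := by
    simpa using (tendsto_exp_neg_atTop_nhds_zero.const_mul (1 - q)).add_const q
  simp only [hshift]
  exact ((continuousAt_log hq0.ne').tendsto).comp hlim

lemma le_ofReal_exp_neg_mul_binKL {x : ℝ≥0∞} {N p q : ℝ} (hq : q ∈ Set.Ioo 0 1)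
    (hp : p ∈ Set.Icc q 1)
    (h : ∀ l, 0 ≤ l → x ≤ ENNReal.ofReal (exp (N * (bernoulliCGF q l - l * p)))) :
    x ≤ ENNReal.ofReal (exp (-N * binKL p q)) := by
  obtain ⟨hqp, hp1⟩ := hp
  rcases hp1.lt_or_eq with hp1 | rfl
  · have := h _ (log_odds_ratio_nonneg hq.1 hqp hp1)
    rwa [bernoulliCGF_log_odds_ratio_sub hq ⟨hq.1.trans_le hqp, hp1⟩, mul_neg, ← neg_mul] at this
  · have hlim : Tendsto (fun l => ENNReal.ofReal (exp (N * (bernoulliCGF q l - l * 1)))) atTop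
        (𝓝 (ENNReal.ofReal (exp (-N * binKL 1 q)))) := by
      rw [binKL_one_left, neg_mul_neg]
      simp only [mul_one]
      exact (ENNReal.continuous_ofReal.tendsto _).comp ((continuous_exp.tendsto _).comp
        ((tendsto_bernoulliCGF_sub_atTop hq.1 hq.2.le).const_mul N))
    exact ge_of_tendsto hlim (eventually_atTop.2 ⟨0, h⟩)

section

variable {Ω : Type*} [MeasurableSpace Ω] {μ : Measure Ω}

lemma ofReal_exp_sum {κ : Type*} (s : Finset κ) (f : κ → ℝ) :
    ENNReal.ofReal (exp (∑ i ∈ s, f i)) = ∏ i ∈ s, ENNReal.ofReal (exp (f i)) := by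
  rw [exp_sum, ENNReal.ofReal_prod_of_nonneg fun i _ => (exp_pos _).le]

lemma ofReal_exp_mul (a r : ℝ) :
    ENNReal.ofReal (exp (a * r)) = ENNReal.ofReal (exp a) ^ r := by
  rw [exp_mul, ENNReal.ofReal_rpow_of_pos (exp_pos a)]

lemma measure_ge_le_ofReal_exp_mul_lintegral {X : Ω → ℝ} (hX : Measurable X) (ε : ℝ) {t : ℝ}
    (ht : 0 ≤ t) :
    μ {ω | ε ≤ X ω} ≤
      ENNReal.ofReal (exp (-t * ε)) * ∫⁻ ω, ENNReal.ofReal (exp (t * X ω)) ∂μ := by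
  have hmarkov := mul_meas_ge_le_lintegral₀ ((hX.const_mul t).exp.ennreal_ofReal).aemeasurable
    (μ := μ) (ENNReal.ofReal (exp (t * ε)))
  calc μ {ω | ε ≤ X ω}
      = ENNReal.ofReal (exp (-t * ε)) * (ENNReal.ofReal (exp (t * ε)) * μ {ω | ε ≤ X ω}) := by
        rw [← mul_assoc, ← ENNReal.ofReal_mul (exp_pos _).le, ← exp_add]
        simp
    _ ≤ _ := by
        gcongr
        refine le_trans (mul_le_mul_right (measure_mono fun ω (hω : ε ≤ X ω) => ?_) _) hmarkov
        exact ENNReal.ofReal_le_ofReal (exp_le_exp.2 (mul_le_mul_of_nonneg_left hω ht))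

lemma lintegral_exp_mul_le_of_zero_or_one [IsProbabilityMeasure μ] {X : Ω → ℝ}
    (hX : Measurable X) (h01 : ∀ ω, X ω = 0 ∨ X ω = 1) {q t : ℝ} (hq : 0 ≤ q)
    (hXq : μ {ω | X ω = 1} ≤ ENNReal.ofReal q) (ht : 0 ≤ t) :
    ∫⁻ ω, ENNReal.ofReal (exp (t * X ω)) ∂μ ≤ ENNReal.ofReal (exp (bernoulliCGF q t)) := by
  have het : 0 ≤ exp t - 1 := by linarith [one_le_exp ht]
  have hpt : ∀ ω, ENNReal.ofReal (exp (t * X ω)) =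
      {ω | X ω = 1}.indicator (fun _ => ENNReal.ofReal (exp t - 1)) ω + 1 := by
    intro ω
    rcases h01 ω with h | h
    · simp [h]
    · simp [h, ← ENNReal.ofReal_one, ← ENNReal.ofReal_add het zero_le_one]
  rw [lintegral_congr hpt, lintegral_add_right _ measurable_const,
    lintegral_indicator_const (measurableSet_eq_fun hX measurable_const), lintegral_one,
    measure_univ, bernoulliCGF, exp_log (by nlinarith)]
  calc ENNReal.ofReal (exp t - 1) * μ {ω | X ω = 1} + 1
      ≤ ENNReal.ofReal (exp t - 1) * ENNReal.ofReal q + 1 := by gcongr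
    _ = ENNReal.ofReal (1 - q + q * exp t) := by
        rw [← ENNReal.ofReal_mul het, ← ENNReal.ofReal_one,
          ← ENNReal.ofReal_add (by positivity) zero_le_one]
        congr 1
        ring

lemma lintegral_exp_mul_sum_le_of_iIndepFun {ι : Type*} [Fintype ι] {X : ι → Ω → ℝ}
    (hindep : iIndepFun X μ) (hX : ∀ i, Measurable (X i)) {t c : ℝ}
    (h : ∀ i, ∫⁻ ω, ENNReal.ofReal (exp (t * X i ω)) ∂μ ≤ ENNReal.ofReal (exp c)) :
    ∫⁻ ω, ENNReal.ofReal (exp (t * ∑ i, X i ω)) ∂μ ≤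
      ENNReal.ofReal (exp (Fintype.card ι * c)) := by
  have hcomp : iIndepFun (fun i ω => ENNReal.ofReal (exp (t * X i ω))) μ :=
    hindep.comp (fun _ x => ENNReal.ofReal (exp (t * x))) fun _ => by fun_prop
  simp_rw [Finset.mul_sum, ofReal_exp_sum]
  rw [lintegral_prod_eq_prod_lintegral_of_indepFun _ _ hcomp fun i => by fun_prop]
  calc _ ≤ ∏ _i : ι, ENNReal.ofReal (exp c) := Finset.prod_le_prod' fun i _ => h i
    _ = _ := by rw [Finset.prod_const, exp_nat_mul, ENNReal.ofReal_pow (exp_pos c).le]; rfl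

lemma lintegral_exp_sum_div_card_le {κ : Type*} [Fintype κ] [Nonempty κ] {Y : κ → Ω → ℝ}
    (hY : ∀ s, Measurable (Y s)) {c : κ → ℝ}
    (h : ∀ s, ∫⁻ ω, ENNReal.ofReal (exp (Y s ω)) ∂μ ≤ ENNReal.ofReal (exp (c s))) :
    ∫⁻ ω, ENNReal.ofReal (exp ((∑ s, Y s ω) / Fintype.card κ)) ∂μ ≤
      ENNReal.ofReal (exp ((∑ s, c s) / Fintype.card κ)) := by
  have hgeom : ∀ a : κ → ℝ, ENNReal.ofReal (exp ((∑ s, a s) / Fintype.card κ)) =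
      ∏ s, ENNReal.ofReal (exp (a s)) ^ (1 / Fintype.card κ : ℝ) := by
    intro a
    simp_rw [Finset.sum_div, ofReal_exp_sum, div_eq_mul_one_div (a _), ofReal_exp_mul]
  simp_rw [hgeom]
  calc _ ≤ ∏ s, (∫⁻ ω, ENNReal.ofReal (exp (Y s ω)) ∂μ) ^ (1 / Fintype.card κ : ℝ) :=
        ENNReal.lintegral_prod_norm_pow_le _ (fun s _ => by fun_prop) (by simp)
          fun _ _ => by positivity
    _ ≤ _ := by gcongr with s; exact h s

lemma measure_mean_ge_le_of_iIndepFun_fiberwise [IsProbabilityMeasure μ] {ι κ : Type*}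
    [Fintype ι] [Nonempty ι] [Fintype κ] [DecidableEq κ] [Nonempty κ] (part : ι → κ)
    {B : ι → Ω → ℝ} (hB : ∀ α, Measurable (B α))
    (hB01 : ∀ α ω, B α ω = 0 ∨ B α ω = 1) {q : ℝ} (hq : 0 ≤ q)
    (hBq : ∀ α, μ {ω | B α ω = 1} ≤ ENNReal.ofReal q)
    (hindep : ∀ s, iIndepFun (fun α : {a // part a = s} => B α.1) μ) (p : ℝ) {l : ℝ}
    (hl : 0 ≤ l) :
    μ {ω | p ≤ (1 / Fintype.card ι : ℝ) * ∑ α, B α ω} ≤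
      ENNReal.ofReal (exp (Fintype.card ι / Fintype.card κ * (bernoulliCGF q l - l * p))) := by
  set n : ℝ := ↑(Fintype.card ι)
  set m : ℝ := ↑(Fintype.card κ)
  have hn : 0 < n := by positivity
  have hm : 0 < m := by positivity
  have hsub : {ω | p ≤ 1 / n * ∑ α, B α ω} ⊆ {ω | n * p ≤ ∑ α, B α ω} := by
    intro ω (hω : p ≤ 1 / n * ∑ α, B α ω)
    rwa [one_div_mul_eq_div, le_div_iff₀' hn] at hω
  have hclass : ∀ s, ∫⁻ ω, ENNReal.ofReal (exp (l * ∑ α : {a // part a = s}, B α ω)) ∂μ ≤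
      ENNReal.ofReal (exp (Fintype.card {a // part a = s} * bernoulliCGF q l)) := fun s =>
    lintegral_exp_mul_sum_le_of_iIndepFun (hindep s) (fun α => hB α) fun α =>
      lintegral_exp_mul_le_of_zero_or_one (hB α) (hB01 α) hq (hBq α) hl
  have hsplit : ∀ ω, l / m * ∑ α, B α ω = (∑ s, l * ∑ α : {a // part a = s}, B α ω) / m := by
    intro ω
    rw [← Fintype.sum_fiberwise part, ← Finset.mul_sum]
    ring
  have hcard : ∑ s, (Fintype.card {a // part a = s} : ℝ) = n := by
    simpa using Fintype.sum_fiberwise part fun _ => (1 : ℝ)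
  calc μ {ω | p ≤ 1 / n * ∑ α, B α ω}
      ≤ μ {ω | n * p ≤ ∑ α, B α ω} := measure_mono hsub
    _ ≤ ENNReal.ofReal (exp (-(l / m) * (n * p))) *
          ∫⁻ ω, ENNReal.ofReal (exp (l / m * ∑ α, B α ω)) ∂μ :=
        measure_ge_le_ofReal_exp_mul_lintegral (by fun_prop) _ (by positivity)
    _ ≤ ENNReal.ofReal (exp (-(l / m) * (n * p))) *
          ENNReal.ofReal (exp ((∑ s, Fintype.card {a // part a = s} * bernoulliCGF q l) / m)) := by
        simp_rw [hsplit]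
        gcongr
        exact lintegral_exp_sum_div_card_le (fun s => by fun_prop) hclass
    _ = ENNReal.ofReal (exp (n / m * (bernoulliCGF q l - l * p))) := by
        rw [← ENNReal.ofReal_mul (exp_pos _).le, ← exp_add, ← Finset.sum_mul, hcard]
        congr 2
        field_simp
        ring

end

theorem colored_bernoulli_kl_bound_general
    {Ω : Type*} [MeasurableSpace Ω] (μ : Measure Ω) [IsProbabilityMeasure μ]
    {ι : Type*} [Fintype ι] [Nonempty ι] (m : ℕ)
    (part : ι → Fin m)
    (B : ι → Ω → ℝ) (hBmeas : ∀ α, Measurable (B α))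
    (hB01 : ∀ α ω, B α ω = 0 ∨ B α ω = 1)
    (q : ℝ) (hq : q ∈ Set.Ioo (0:ℝ) 1)
    (hqbound : ∀ α, μ {ω | B α ω = 1} ≤ ENNReal.ofReal q)
    (hindep : ∀ s : Fin m,
      iIndepFun
        (fun α : {a : ι // part a = s} => B α.1) μ)
    (Neff : ℝ) (hNeff : Neff = (Fintype.card ι : ℝ) / m) :
    ∀ p : ℝ, p ∈ Set.Icc q 1 →
      μ {ω | p ≤ (1 / (Fintype.card ι : ℝ)) * ∑ α, B α ω} ≤
        ENNReal.ofReal (Real.exp (-Neff * binKL p q)) := by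
  intro p hp
  have : Nonempty (Fin m) := ⟨part (Classical.arbitrary ι)⟩
  refine le_ofReal_exp_neg_mul_binKL hq hp fun l hl => ?_
  simpa only [hNeff, Fintype.card_fin] using measure_mean_ge_le_of_iIndepFun_fiberwise part
    hBmeas hB01 hq.1.le hqbound hindep p hl

/-- Colored Bernoulli KL bound: if `{0,1}`-valued random variables indexed by a finite
nonempty set, partitioned into `m` jointly-independent classes, each satisfy
`P(B_α = 1) ≤ q`, then the empirical mean `B̄` satisfies, for every `p ∈ [q,1]`,
`P(B̄ ≥ p) ≤ exp(−N_eff·D_B(p‖q))` with `N_eff = |I|/m`. -/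
theorem colored_bernoulli_kl_bound
    {Ω : Type*} [MeasurableSpace Ω] (μ : Measure Ω) [IsProbabilityMeasure μ]
    {ι : Type*} [Fintype ι] [Nonempty ι] (m : ℕ) (hm : 0 < m)
    (part : ι → Fin m)
    (B : ι → Ω → ℝ) (hBmeas : ∀ α, Measurable (B α))
    (hB01 : ∀ α ω, B α ω = 0 ∨ B α ω = 1)
    (q : ℝ) (hq : q ∈ Set.Ioo (0:ℝ) 1)
    (hqbound : ∀ α, μ {ω | B α ω = 1} ≤ ENNReal.ofReal q)
    (hindep : ∀ s : Fin m,
      iIndepFun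
        (fun α : {a : ι // part a = s} => B α.1) μ)
    (Neff : ℝ) (hNeff : Neff = (Fintype.card ι : ℝ) / m) :
    ∀ p : ℝ, p ∈ Set.Icc q 1 →
      μ {ω | p ≤ (1 / (Fintype.card ι : ℝ)) * ∑ α, B α ω} ≤
        ENNReal.ofReal (Real.exp (-Neff * binKL p q)) :=
  colored_bernoulli_kl_bound_general μ m part B hBmeas hB01 q hq hqbound hindep Neff hNeff
end

section
/- For every q ∈ (0,1) and every s with 0 ≤ s ≤ 1 − q, the binary relative entropy satisfies D_B(q + s ‖ q) ≥ s² / ( 2·q·(1 − q) + 2·s/3 ). -/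
/-!
Write `v = q(1-q)` and `f(s) = D_B(q+s‖q) - s² / (2v + 2s/3)`. Then `f(0) = f'(0) = 0`, so it
suffices that `f'' ≥ 0` on `(0, 1-q)`. The second derivative of the entropy term is
`1/((q+s)(1-q-s))` and that of the bound is `8v² / (2v + 2s/3)³`; their comparison follows from
`(q+s)(1-q-s) ≤ v + s` and `8v²(v + s) ≤ (2v + 2s/3)³`.
-/

open Real Set

lemma apply_le_of_deriv_nonneg_of_deriv2_nonneg {f f' f'' : ℝ → ℝ} {a b : ℝ}
    (hf : ContinuousOn f (Icc a b)) (hf' : ∀ x ∈ Ico a b, HasDerivAt f (f' x) x)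
    (hf'' : ∀ x ∈ Ico a b, HasDerivAt f' (f'' x) x) (ha : 0 ≤ f' a)
    (hf''_nonneg : ∀ x ∈ Ioo a b, 0 ≤ f'' x) {x : ℝ} (hx : x ∈ Icc a b) :
    f a ≤ f x := by
  have hf'_mono : MonotoneOn f' (Ico a b) := by
    refine monotoneOn_of_hasDerivWithinAt_nonneg (f' := f'') (convex_Ico a b)
      (fun y hy => (hf'' y hy).continuousAt.continuousWithinAt) (fun y hy => ?_) ?_ <;>
      rw [interior_Ico] at *
    · exact (hf'' y (Ioo_subset_Ico_self hy)).hasDerivWithinAt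
    · exact hf''_nonneg
  have hf_mono : MonotoneOn f (Icc a b) := by
    refine monotoneOn_of_hasDerivWithinAt_nonneg (f' := f') (convex_Icc a b) hf
      (fun y hy => ?_) ?_ <;> rw [interior_Icc] at *
    · exact (hf' y (Ioo_subset_Ico_self hy)).hasDerivWithinAt
    · intro y hy
      have hay : a ∈ Ico a b := ⟨le_rfl, hy.1.trans hy.2⟩
      exact ha.trans (hf'_mono hay (Ioo_subset_Ico_self hy) hy.1.le)
  exact hf_mono ⟨le_rfl, hx.1.trans hx.2⟩ hx hx.1

lemma mul_log_div_eq (x : ℝ) {y : ℝ} (hy : y ≠ 0) :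
    x * log (x / y) = x * log x - x * log y := by
  rcases eq_or_ne x 0 with rfl | hx
  · simp
  · rw [log_div hx hy]; ring

lemma binKL_eq_neg_binEntropy (p : ℝ) {q : ℝ} (hq₀ : q ≠ 0) (hq₁ : q ≠ 1) :
    binKL p q = -binEntropy p - p * log q - (1 - p) * log (1 - q) := by
  rw [binKL, binEntropy, mul_log_div_eq _ hq₀, mul_log_div_eq _ (sub_ne_zero.2 hq₁.symm),
    log_inv, log_inv]
  ring

@[simp]
lemma binKL_self (p : ℝ) : binKL p p = 0 := by
  simp [binKL]

lemma continuous_binKL_left {q : ℝ} (hq₀ : q ≠ 0) (hq₁ : q ≠ 1) :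
    Continuous (binKL · q) := by
  simp only [binKL_eq_neg_binEntropy _ hq₀ hq₁]
  fun_prop

lemma hasDerivAt_binKL_left {p q : ℝ} (hp₀ : p ≠ 0) (hp₁ : p ≠ 1) (hq₀ : q ≠ 0)
    (hq₁ : q ≠ 1) :
    HasDerivAt (binKL · q) (log p - log (1 - p) - log q + log (1 - q)) p := by
  simp only [binKL_eq_neg_binEntropy _ hq₀ hq₁]
  refine (((hasDerivAt_binEntropy hp₀ hp₁).neg.sub ((hasDerivAt_id' p).mul_const (log q))).sub
    (((hasDerivAt_id' p).const_sub 1).mul_const (log (1 - q)))).congr_deriv ?_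
  ring

lemma hasDerivAt_log_sub_log_one_sub {p : ℝ} (hp₀ : p ≠ 0) (hp₁ : p ≠ 1) :
    HasDerivAt (fun p => log p - log (1 - p)) (1 / p + 1 / (1 - p)) p := by
  refine ((hasDerivAt_log hp₀).sub
    (((hasDerivAt_id' p).const_sub 1).log (sub_ne_zero.2 hp₁.symm))).congr_deriv ?_
  field_simp
  ring

noncomputable def bennettBound (v s : ℝ) : ℝ := s ^ 2 / (2 * v + 2 * s / 3)

@[simp]
lemma bennettBound_zero (v : ℝ) : bennettBound v 0 = 0 := by
  simp [bennettBound]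

lemma hasDerivAt_bennettBound_denom (v s : ℝ) :
    HasDerivAt (fun s => 2 * v + 2 * s / 3) (2 / 3) s := by
  simpa using ((hasDerivAt_id' s).const_mul 2).div_const 3 |>.const_add (2 * v)

lemma hasDerivAt_bennettBound {v s : ℝ} (hs : 2 * v + 2 * s / 3 ≠ 0) :
    HasDerivAt (bennettBound v) ((4 * v * s + 2 * s ^ 2 / 3) / (2 * v + 2 * s / 3) ^ 2) s := by
  refine ((hasDerivAt_pow 2 s).div (hasDerivAt_bennettBound_denom v s) hs).congr_deriv ?_
  norm_num
  ring

lemma hasDerivAt_deriv_bennettBound {v s : ℝ} (hs : 2 * v + 2 * s / 3 ≠ 0) :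
    HasDerivAt (fun s => (4 * v * s + 2 * s ^ 2 / 3) / (2 * v + 2 * s / 3) ^ 2)
      (8 * v ^ 2 / (2 * v + 2 * s / 3) ^ 3) s := by
  have hnum : HasDerivAt (fun s => 4 * v * s + 2 * s ^ 2 / 3) (4 * v + 4 * s / 3) s := by
    refine (((hasDerivAt_id' s).const_mul (4 * v)).add
      (((hasDerivAt_pow 2 s).const_mul 2).div_const 3)).congr_deriv ?_
    norm_num
    ring
  refine (hnum.div ((hasDerivAt_bennettBound_denom v s).pow 2) (pow_ne_zero 2 hs)).congr_deriv ?_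
  simp only [Pi.pow_apply]
  rw [div_eq_div_iff (pow_ne_zero 2 (pow_ne_zero 2 hs)) (pow_ne_zero 3 hs)]
  push_cast
  ring

lemma mul_one_sub_add_le {q s : ℝ} (hq : 0 ≤ q) (hs : 0 ≤ s) :
    (q + s) * (1 - (q + s)) ≤ q * (1 - q) + s := by
  nlinarith [mul_nonneg hq hs]

lemma eight_sq_mul_add_le_cube {v s : ℝ} (hv : 0 ≤ v) (hs : 0 ≤ s) :
    8 * v ^ 2 * (v + s) ≤ (2 * v + 2 * s / 3) ^ 3 := by
  nlinarith [mul_nonneg hv (sq_nonneg s), pow_nonneg hs 3]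

lemma deriv2_bennettBound_le {q s : ℝ} (hq : 0 < q) (hs : 0 ≤ s) (hqs : q + s < 1) :
    8 * (q * (1 - q)) ^ 2 / (2 * (q * (1 - q)) + 2 * s / 3) ^ 3 ≤
      1 / (q + s) + 1 / (1 - (q + s)) := by
  have hp₀ : 0 < q + s := by linarith
  have hp₁ : 0 < 1 - (q + s) := by linarith
  have hv : 0 < q * (1 - q) := mul_pos hq (by linarith)
  rw [div_add_div _ _ hp₀.ne' hp₁.ne', div_le_div_iff₀ (by positivity) (by positivity)]
  calc 8 * (q * (1 - q)) ^ 2 * ((q + s) * (1 - (q + s)))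
      ≤ 8 * (q * (1 - q)) ^ 2 * (q * (1 - q) + s) := by
        gcongr; exact mul_one_sub_add_le hq.le hs
    _ ≤ (2 * (q * (1 - q)) + 2 * s / 3) ^ 3 := eight_sq_mul_add_le_cube hv.le hs
    _ = _ := by ring

/-- Bennett-type lower bound for the binary relative entropy:
for `q ∈ (0,1)` and `0 ≤ s ≤ 1 − q`,
`D_B(q + s ‖ q) ≥ s² / ( 2·q·(1−q) + 2·s/3 )`. -/
theorem binKL_bennett_lower_bound
    (q : ℝ) (hq : q ∈ Set.Ioo (0:ℝ) 1)
    (s : ℝ) (hs0 : 0 ≤ s) (hs1 : s ≤ 1 - q) :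
    s ^ 2 / (2 * q * (1 - q) + 2 * s / 3) ≤ binKL (q + s) q := by
  obtain ⟨hq₀, hq₁⟩ := hq
  set v := q * (1 - q)
  have hv : 0 < v := mul_pos hq₀ (sub_pos.2 hq₁)
  have hD : ∀ s, 0 ≤ s → 2 * v + 2 * s / 3 ≠ 0 := fun s hs => by positivity
  have hp : ∀ x ∈ Ico 0 (1 - q), q + x ≠ 0 ∧ q + x ≠ 1 := fun x hx =>
    ⟨by linarith [hx.1], by linarith [hx.2]⟩
  suffices key : binKL (q + 0) q - bennettBound v 0 ≤ binKL (q + s) q - bennettBound v s by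
    rw [add_zero, binKL_self, bennettBound_zero, sub_zero, sub_nonneg, bennettBound] at key
    rwa [mul_assoc]
  refine apply_le_of_deriv_nonneg_of_deriv2_nonneg
    (f := fun s => binKL (q + s) q - bennettBound v s)
    (f' := fun s => (log (q + s) - log (1 - (q + s)) - log q + log (1 - q))
      - (4 * v * s + 2 * s ^ 2 / 3) / (2 * v + 2 * s / 3) ^ 2)
    (f'' := fun s => (1 / (q + s) + 1 / (1 - (q + s)))
      - 8 * v ^ 2 / (2 * v + 2 * s / 3) ^ 3)
    ?_ ?_ ?_ ?_ ?_ ⟨hs0, hs1⟩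
  · refine ContinuousOn.sub
      ((continuous_binKL_left hq₀.ne' hq₁.ne).comp (continuous_const_add q)).continuousOn
      (continuousOn_of_forall_continuousAt fun x hx => ?_)
    exact (hasDerivAt_bennettBound (hD x hx.1)).continuousAt
  · intro x hx
    obtain ⟨hp₀, hp₁⟩ := hp x hx
    exact ((hasDerivAt_binKL_left hp₀ hp₁ hq₀.ne' hq₁.ne).comp_const_add q x).sub
      (hasDerivAt_bennettBound (hD x hx.1))
  · intro x hx
    obtain ⟨hp₀, hp₁⟩ := hp x hx
    exact ((((hasDerivAt_log_sub_log_one_sub hp₀ hp₁).comp_const_add q x).sub_const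
      (log q)).add_const (log (1 - q))).sub (hasDerivAt_deriv_bennettBound (hD x hx.1))
  · simp
  · intro x hx
    exact sub_nonneg.2 (deriv2_bennettBound_le hq₀ hx.1.le (by linarith [hx.2]))
end

section
/- Let (Ω, P) be a probability space, let r ≥ 1, and let μ_1, …, μ_r : Ω → ℝ be nonnegative measurable functions such that all products μ_a·μ_b are integrable, and define the matrix N ∈ ℝ^{r×r} by N_{ab} = E[μ_a·μ_b]. Suppose that for every a ∈ {1,…,r} there exist a measurable set Ω_a with p_a := P(Ω_a) > 0, and constants η_a > 0 and θ_a ∈ [0,1), such that for every ω ∈ Ω_a one has μ_a(ω) ≥ η_a and ∑_{b ≠ a} μ_b(ω) ≤ θ_a·μ_a(ω). Then, with p* = min_a p_a and δ* = min_a (1 − θ_a)·η_a, for every c ∈ ℝ^r: cᵀ N c ≥ p*·δ*²·‖c‖_∞² ≥ (p*·δ*²/r)·‖c‖₂². In particular N is positive definite. -/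
open Matrix MeasureTheory Finset

/-! Pick `a` with `|c a| = ‖c‖_∞`. On `Ωa a` the term `c a μ_a` dominates the rest of
`∑ c_b μ_b`, so there `|∑ c_b μ_b| ≥ (1 - θ_a) η_a ‖c‖_∞ ≥ δ* ‖c‖_∞`. Since
`cᵀ N c = E[(∑ c_b μ_b)²]`, Markov's inequality gives `cᵀ N c ≥ p* δ*² ‖c‖_∞²`. -/

section FiniteSums

variable {ι : Type*} [Fintype ι]

theorem sum_sq_le_card_mul_sup'_abs_sq [Nonempty ι] (c : ι → ℝ) :
    ∑ a, c a ^ 2 ≤ Fintype.card ι * univ.sup' univ_nonempty (fun a => |c a|) ^ 2 := by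
  calc ∑ a, c a ^ 2
      ≤ ∑ _a : ι, univ.sup' univ_nonempty (fun a => |c a|) ^ 2 := by
        refine sum_le_sum fun a _ => ?_
        rw [← sq_abs]
        exact pow_le_pow_left₀ (abs_nonneg _) (le_sup' (fun a => |c a|) (mem_univ a)) 2
    _ = _ := by rw [sum_const, card_univ, nsmul_eq_mul]

theorem sub_mul_le_abs_sum_mul_of_dominant [DecidableEq ι] {μ c : ι → ℝ} {a : ι} {θ : ℝ}
    (hμ : ∀ b, 0 ≤ μ b) (hc : ∀ b, |c b| ≤ |c a|)
    (hdom : ∑ b ∈ univ.erase a, μ b ≤ θ * μ a) :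
    (1 - θ) * μ a * |c a| ≤ |∑ b, c b * μ b| := by
  have hrest : |∑ b ∈ univ.erase a, c b * μ b| ≤ |c a| * (θ * μ a) :=
    calc |∑ b ∈ univ.erase a, c b * μ b|
        ≤ ∑ b ∈ univ.erase a, |c b| * μ b := by
          refine (abs_sum_le_sum_abs _ _).trans (sum_le_sum fun b _ => ?_)
          rw [abs_mul, abs_of_nonneg (hμ b)]
      _ ≤ ∑ b ∈ univ.erase a, |c a| * μ b :=
          sum_le_sum fun b _ => mul_le_mul_of_nonneg_right (hc b) (hμ b)
      _ ≤ |c a| * (θ * μ a) := by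
          rw [← mul_sum]; exact mul_le_mul_of_nonneg_left hdom (abs_nonneg _)
  have hsplit := add_sum_erase univ (fun b => c b * μ b) (mem_univ a)
  have hhead : |c a * μ a| = |c a| * μ a := by rw [abs_mul, abs_of_nonneg (hμ a)]
  have := abs_sub_abs_le_abs_add (c a * μ a) (∑ b ∈ univ.erase a, c b * μ b)
  rw [hsplit, hhead] at this
  linarith

theorem posDef_of_mul_sq_sup'_abs_le [Nonempty ι] {N : Matrix ι ι ℝ} (hN : N.IsHermitian)
    {κ : ℝ} (hκ : 0 < κ)
    (h : ∀ c, κ * univ.sup' univ_nonempty (fun a => |c a|) ^ 2 ≤ c ⬝ᵥ (N *ᵥ c)) :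
    N.PosDef := by
  refine posDef_iff_dotProduct_mulVec.2 ⟨hN, fun x hx => ?_⟩
  obtain ⟨i, hi⟩ := Function.ne_iff.mp hx
  have hsup : 0 < univ.sup' univ_nonempty (fun a => |x a|) :=
    (abs_pos.2 hi).trans_le (le_sup' (fun a => |x a|) (mem_univ i))
  rw [star_trivial]
  exact (by positivity : 0 < κ * _).trans_le (h x)

end FiniteSums

section Gram

variable {Ω ι : Type*} [MeasurableSpace Ω] {P : Measure Ω} [Fintype ι]

theorem sq_sum_mul_eq_sum_sum (c : ι → ℝ) (x : ι → ℝ) :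
    (∑ a, c a * x a) ^ 2 = ∑ a, ∑ b, c a * c b * (x a * x b) := by
  rw [sq, sum_mul_sum]
  exact sum_congr rfl fun a _ => sum_congr rfl fun b _ => by ring

theorem integrable_sq_sum_mul {f : ι → Ω → ℝ}
    (hint : ∀ a b, Integrable (fun ω => f a ω * f b ω) P) (c : ι → ℝ) :
    Integrable (fun ω => (∑ a, c a * f a ω) ^ 2) P := by
  simp_rw [sq_sum_mul_eq_sum_sum c]
  exact integrable_finsetSum _ fun a _ => integrable_finsetSum _ fun b _ =>
    (hint a b).const_mul _

theorem dotProduct_mulVec_eq_integral_sq {f : ι → Ω → ℝ}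
    (hint : ∀ a b, Integrable (fun ω => f a ω * f b ω) P)
    {N : Matrix ι ι ℝ} (hN : ∀ a b, N a b = ∫ ω, f a ω * f b ω ∂P) (c : ι → ℝ) :
    c ⬝ᵥ (N *ᵥ c) = ∫ ω, (∑ a, c a * f a ω) ^ 2 ∂P := by
  simp_rw [sq_sum_mul_eq_sum_sum c]
  rw [integral_finsetSum _ fun a _ => integrable_finsetSum _ fun b _ =>
    (hint a b).const_mul _]
  simp_rw [integral_finsetSum _ fun b _ => (hint _ b).const_mul _, integral_const_mul]
  simp only [dotProduct, mulVec, hN, mul_sum]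
  exact sum_congr rfl fun a _ => sum_congr rfl fun b _ => by ring

theorem mul_measureReal_le_integral_of_le_on [IsFiniteMeasure P] {g : Ω → ℝ} {s : Set Ω}
    {k : ℝ} (hg : 0 ≤ g) (hgi : Integrable g P) (hk : ∀ ω ∈ s, k ≤ g ω) (hk0 : 0 ≤ k) :
    k * P.real s ≤ ∫ ω, g ω ∂P :=
  calc k * P.real s ≤ k * P.real {ω | k ≤ g ω} :=
        mul_le_mul_of_nonneg_left (measureReal_mono hk) hk0
    _ ≤ ∫ ω, g ω ∂P := mul_meas_ge_le_integral_of_nonneg (.of_forall hg) hgi k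

theorem mul_sq_sup'_abs_le_dotProduct_mulVec
    [Nonempty ι] [DecidableEq ι] [IsFiniteMeasure P]
    {f : ι → Ω → ℝ} (hf : ∀ a ω, 0 ≤ f a ω)
    (hint : ∀ a b, Integrable (fun ω => f a ω * f b ω) P)
    {N : Matrix ι ι ℝ} (hN : ∀ a b, N a b = ∫ ω, f a ω * f b ω ∂P)
    {s : ι → Set Ω} {η θ : ι → ℝ} (hθ : ∀ a, θ a ≤ 1)
    (hdom : ∀ a, ∀ ω ∈ s a, η a ≤ f a ω ∧ ∑ b ∈ univ.erase a, f b ω ≤ θ a * f a ω)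
    {p δ : ℝ} (hp : ∀ a, p ≤ P.real (s a)) (hδ0 : 0 ≤ δ) (hδ : ∀ a, δ ≤ (1 - θ a) * η a)
    (c : ι → ℝ) :
    p * δ ^ 2 * univ.sup' univ_nonempty (fun a => |c a|) ^ 2 ≤ c ⬝ᵥ (N *ᵥ c) := by
  obtain ⟨a, -, ha⟩ := exists_mem_eq_sup' univ_nonempty (fun a => |c a|)
  have hc : ∀ b, |c b| ≤ |c a| := fun b => ha ▸ le_sup' (fun a => |c a|) (mem_univ b)
  have hpt : ∀ ω ∈ s a, (δ * |c a|) ^ 2 ≤ (∑ b, c b * f b ω) ^ 2 := by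
    intro ω hω
    obtain ⟨hη, hθa⟩ := hdom a ω hω
    have hδf : δ ≤ (1 - θ a) * f a ω :=
      (hδ a).trans (mul_le_mul_of_nonneg_left hη (sub_nonneg.2 (hθ a)))
    rw [← sq_abs (∑ b, c b * f b ω)]
    refine pow_le_pow_left₀ (by positivity) ?_ 2
    calc δ * |c a| ≤ (1 - θ a) * f a ω * |c a| :=
          mul_le_mul_of_nonneg_right hδf (abs_nonneg _)
      _ ≤ |∑ b, c b * f b ω| :=
          sub_mul_le_abs_sum_mul_of_dominant (μ := (f · ω)) (fun b => hf b ω) hc hθa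
  rw [dotProduct_mulVec_eq_integral_sq hint hN, ha]
  calc p * δ ^ 2 * |c a| ^ 2 ≤ (δ * |c a|) ^ 2 * P.real (s a) := by
        rw [mul_comm _ (P.real _), mul_pow, ← mul_assoc]; gcongr; exact hp a
    _ ≤ ∫ ω, (∑ b, c b * f b ω) ^ 2 ∂P :=
        mul_measureReal_le_integral_of_le_on (fun ω => sq_nonneg _)
          (integrable_sq_sum_mul hint c) hpt (sq_nonneg _)

end Gram

theorem dominant_response_posdef_general
    {Ω : Type*} [MeasurableSpace Ω] (P : Measure Ω) [IsProbabilityMeasure P]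
    (r : ℕ) [NeZero r]
    (μf : Fin r → Ω → ℝ)
    (hnonneg : ∀ a ω, 0 ≤ μf a ω)
    (hint : ∀ a b, Integrable (fun ω => μf a ω * μf b ω) P)
    (N : Matrix (Fin r) (Fin r) ℝ)
    (hN : ∀ a b, N a b = ∫ ω, μf a ω * μf b ω ∂P)
    (Ωa : Fin r → Set Ω)
    (pa : Fin r → ℝ) (hpa : ∀ a, pa a = (P (Ωa a)).toReal)
    (hpapos : ∀ a, 0 < pa a)
    (η : Fin r → ℝ) (hη : ∀ a, 0 < η a)
    (θ : Fin r → ℝ) (hθ : ∀ a, θ a ∈ Set.Ico (0:ℝ) 1)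
    (hdom : ∀ a, ∀ ω ∈ Ωa a,
      η a ≤ μf a ω ∧ ∑ b ∈ univ.erase a, μf b ω ≤ θ a * μf a ω)
    (pstar : ℝ) (hpstar : IsLeast {x : ℝ | ∃ a, x = pa a} pstar)
    (δstar : ℝ) (hδstar : IsLeast {x : ℝ | ∃ a, x = (1 - θ a) * η a} δstar) :
    (∀ c : Fin r → ℝ,
      pstar * δstar ^ 2 * (univ.sup' univ_nonempty (fun a => |c a|)) ^ 2 ≤
        c ⬝ᵥ (N *ᵥ c) ∧
      (pstar * δstar ^ 2 / r) * ∑ a, (c a) ^ 2 ≤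
        pstar * δstar ^ 2 * (univ.sup' univ_nonempty (fun a => |c a|)) ^ 2) ∧
    N.PosDef := by
  have hp0 : 0 < pstar := by
    obtain ⟨⟨a, rfl⟩, -⟩ := hpstar
    exact hpapos a
  have hδ0 : 0 < δstar := by
    obtain ⟨⟨a, rfl⟩, -⟩ := hδstar
    exact mul_pos (sub_pos.2 (hθ a).2) (hη a)
  have hlower := mul_sq_sup'_abs_le_dotProduct_mulVec hnonneg hint hN
    (fun a => (hθ a).2.le) hdom (fun a => hpa a ▸ hpstar.2 ⟨a, rfl⟩) hδ0.le
    (fun a => hδstar.2 ⟨a, rfl⟩)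
  have hsymm : N.IsHermitian := IsHermitian.ext fun a b => by
    rw [star_trivial, hN, hN]
    simp_rw [mul_comm]
  refine ⟨fun c => ⟨hlower c, ?_⟩, posDef_of_mul_sq_sup'_abs_le hsymm (by positivity) hlower⟩
  have hr : (0 : ℝ) < r := by exact_mod_cast Nat.pos_of_neZero r
  calc pstar * δstar ^ 2 / r * ∑ a, c a ^ 2
      ≤ pstar * δstar ^ 2 / r * (r * univ.sup' univ_nonempty (fun a => |c a|) ^ 2) := by
        gcongr
        simpa using sum_sq_le_card_mul_sup'_abs_sq c
    _ = pstar * δstar ^ 2 * univ.sup' univ_nonempty (fun a => |c a|) ^ 2 := by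
        field_simp

/-- Dominant-response positive definiteness for a random-feature Gram matrix:
if for each index `a` there is a positive-probability set of features on which the
`a`-th mean response dominates the combined response of the others, then the matrix
`N_{ab} = E[μ_a·μ_b]` satisfies
`cᵀ N c ≥ p*·δ*²·‖c‖_∞² ≥ (p*·δ*²/r)·‖c‖₂²` for all `c`; in particular `N` is
positive definite. -/
theorem dominant_response_posdef
    {Ω : Type*} [MeasurableSpace Ω] (P : Measure Ω) [IsProbabilityMeasure P]
    (r : ℕ) [NeZero r]
    (μf : Fin r → Ω → ℝ)
    (hmeas : ∀ a, Measurable (μf a)) (hnonneg : ∀ a ω, 0 ≤ μf a ω)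
    (hint : ∀ a b, Integrable (fun ω => μf a ω * μf b ω) P)
    (N : Matrix (Fin r) (Fin r) ℝ)
    (hN : ∀ a b, N a b = ∫ ω, μf a ω * μf b ω ∂P)
    (Ωa : Fin r → Set Ω) (hΩa : ∀ a, MeasurableSet (Ωa a))
    (pa : Fin r → ℝ) (hpa : ∀ a, pa a = (P (Ωa a)).toReal)
    (hpapos : ∀ a, 0 < pa a)
    (η : Fin r → ℝ) (hη : ∀ a, 0 < η a)
    (θ : Fin r → ℝ) (hθ : ∀ a, θ a ∈ Set.Ico (0:ℝ) 1)
    (hdom : ∀ a, ∀ ω ∈ Ωa a,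
      η a ≤ μf a ω ∧ ∑ b ∈ univ.erase a, μf b ω ≤ θ a * μf a ω)
    (pstar : ℝ) (hpstar : IsLeast {x : ℝ | ∃ a, x = pa a} pstar)
    (δstar : ℝ) (hδstar : IsLeast {x : ℝ | ∃ a, x = (1 - θ a) * η a} δstar) :
    (∀ c : Fin r → ℝ,
      pstar * δstar ^ 2 * (univ.sup' univ_nonempty (fun a => |c a|)) ^ 2 ≤
        c ⬝ᵥ (N *ᵥ c) ∧
      (pstar * δstar ^ 2 / r) * ∑ a, (c a) ^ 2 ≤
        pstar * δstar ^ 2 * (univ.sup' univ_nonempty (fun a => |c a|)) ^ 2) ∧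
    N.PosDef :=
  dominant_response_posdef_general P r μf hnonneg hint N hN Ωa pa hpa hpapos η hη θ hθ hdom pstar
    hpstar δstar hδstar
end

section
/- Let N ∈ ℝ^{r×r} be symmetric positive definite, let H ∈ ℝ^{r×r} be symmetric, let q be in the probability simplex of ℝ^r with q_a > 0 for all a, let y ∈ {−1,+1}^r, and let λ > 0. Let η ↦ N_η be a map from [0, η₀) into symmetric r×r matrices with N_0 = N and N_η = N + η·H + o(η) as η → 0⁺; for η small enough that N_η is positive definite, let g_η be the unique minimizer over ℝ^r of Φ_η(g) = ∑_{a=1}^r q_a·ℓ(y_a·g_a) + (λ/2)·gᵀ N_η^{−1} g. Then η ↦ g_η is right-differentiable at η = 0, with derivative (d/dη) g_η |_{η=0} = λ·J₀^{−1}·N^{−1}·H·N^{−1}·g₀, where g₀ = g_{η=0} and J₀ = diag( q_a·ℓ''(y_a·(g₀)_a) )_{a=1}^r + λ·N^{−1}. -/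
open Matrix Set Filter Asymptotics

/-- Logistic loss `ℓ(u) = log(1 + e^{−u})`. -/
noncomputable def logLoss (u : ℝ) : ℝ := Real.log (1 + Real.exp (-u))

/-- Second derivative of the logistic loss: `ℓ''(u) = e^u/(1 + e^u)²`. -/
noncomputable def logLoss'' (u : ℝ) : ℝ := Real.exp u / (1 + Real.exp u) ^ 2

/-! `g_η` is characterised by the stationarity equation `∇ℓ(g_η) + λ A_η g_η = 0` with
`A_η = N_η⁻¹`, and `η ↦ A_η` has right derivative `-N⁻¹ H N⁻¹` at `0` (derivative of matrix
inversion). Since `ℓ'` is monotone and `A_0` is coercive, the stationary point depends Lipschitz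
continuously on `A`, so `g_η - g_0 = O(η)`. With this a priori bound the stationarity equation
linearises to `J₀ (g_η - g_0) - λ η N⁻¹ H N⁻¹ g_0 = o(η)`, and `J₀` is positive definite. -/

open Topology

noncomputable def logLoss' (u : ℝ) : ℝ := -(1 + Real.exp u)⁻¹

lemma hasDerivAt_logLoss (u : ℝ) : HasDerivAt logLoss (logLoss' u) u := by
  have h := (((Real.hasDerivAt_exp (-u)).comp u (hasDerivAt_neg u)).const_add 1).log
    (by positivity : 0 < 1 + Real.exp (-u)).ne'
  refine h.congr_deriv ?_
  simp only [Function.comp_apply, logLoss', Real.exp_neg]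
  field_simp
  ring

lemma hasDerivAt_logLoss' (u : ℝ) : HasDerivAt logLoss' (logLoss'' u) u := by
  have h := (((Real.hasDerivAt_exp u).const_add 1).inv (by positivity)).neg
  refine h.congr_deriv ?_
  rw [logLoss'']
  ring

lemma logLoss''_pos (u : ℝ) : 0 < logLoss'' u := by
  rw [logLoss'']
  positivity

lemma monotone_logLoss' : Monotone logLoss' := fun u v huv => by
  simp only [logLoss', neg_le_neg_iff]
  exact inv_anti₀ (by positivity) (by gcongr)

section Logistic

variable {ι : Type*} (q y : ι → ℝ) (lam : ℝ)

noncomputable def logisticHessian [DecidableEq ι] (A : Matrix ι ι ℝ) (g : ι → ℝ) :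
    Matrix ι ι ℝ :=
  diagonal (fun a => q a * y a ^ 2 * logLoss'' (y a * g a)) + lam • A

variable {q y lam} in
lemma posDef_logisticHessian [DecidableEq ι] (hq : ∀ a, 0 ≤ q a) (hlam : 0 < lam)
    {A : Matrix ι ι ℝ} (hA : A.PosDef) (g : ι → ℝ) : (logisticHessian q y lam A g).PosDef :=
  PosDef.posSemidef_add (PosSemidef.diagonal fun a => mul_nonneg
    (mul_nonneg (hq a) (sq_nonneg _)) (logLoss''_pos _).le) (hA.smul hlam)

variable [Fintype ι]

noncomputable def logisticObjective (A : Matrix ι ι ℝ) (g : ι → ℝ) : ℝ :=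
  ∑ a, q a * logLoss (y a * g a) + (lam / 2) * (g ⬝ᵥ (A *ᵥ g))

noncomputable def logLossGrad (g : ι → ℝ) : ι → ℝ :=
  fun a => q a * y a * logLoss' (y a * g a)

noncomputable def logisticGrad (A : Matrix ι ι ℝ) (g : ι → ℝ) : ι → ℝ :=
  logLossGrad q y g + lam • (A *ᵥ g)

variable {q y lam}

lemma hasDerivAt_logisticObjective_line {A : Matrix ι ι ℝ} (hA : A.IsSymm) (g v : ι → ℝ) :
    HasDerivAt (fun t : ℝ => logisticObjective q y lam A (g + t • v))
      (logisticGrad q y lam A g ⬝ᵥ v) 0 := by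
  have hloss : HasDerivAt (fun t : ℝ => ∑ a, q a * logLoss (y a * (g a + t * v a)))
      (logLossGrad q y g ⬝ᵥ v) 0 := by
    refine (HasDerivAt.fun_sum fun a _ => ((hasDerivAt_logLoss (y a * g a)).comp_of_eq 0
      (((hasDerivAt_mul_const (v a)).const_add (g a)).const_mul (y a))
      (by simp)).const_mul (q a)).congr_deriv ?_
    simp only [logLossGrad, dotProduct]
    exact Finset.sum_congr rfl fun a _ => by ring
  have hquad : HasDerivAt (fun t : ℝ => (lam / 2) * ((g + t • v) ⬝ᵥ (A *ᵥ (g + t • v))))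
      (lam * (A *ᵥ g) ⬝ᵥ v) 0 := by
    have hsymm : g ⬝ᵥ (A *ᵥ v) = (A *ᵥ g) ⬝ᵥ v := by
      rw [dotProduct_mulVec, ← mulVec_transpose, hA.eq, dotProduct_comm]
    have hpoly : HasDerivAt (fun t : ℝ => (lam / 2) * (g ⬝ᵥ (A *ᵥ g))
        + t * (lam * (A *ᵥ g) ⬝ᵥ v) + t ^ 2 * ((lam / 2) * (v ⬝ᵥ (A *ᵥ v))))
        (lam * (A *ᵥ g) ⬝ᵥ v) 0 := by
      simpa using ((hasDerivAt_mul_const _).const_add _).fun_add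
        ((hasDerivAt_pow 2 (0 : ℝ)).mul_const ((lam / 2) * (v ⬝ᵥ (A *ᵥ v))))
    refine hpoly.congr_of_eventuallyEq (Eventually.of_forall fun t => ?_)
    simp only [mulVec_add, mulVec_smul, add_dotProduct, dotProduct_add, smul_dotProduct,
      dotProduct_smul, smul_eq_mul, hsymm, dotProduct_comm v (A *ᵥ g)]
    ring
  refine (hloss.add hquad).congr_deriv ?_ |>.congr_of_eventuallyEq ?_
  · simp [logisticGrad, add_dotProduct, smul_dotProduct]
  · exact Eventually.of_forall fun t => by simp [logisticObjective]

lemma IsMinOn.logisticGrad_eq_zero {A : Matrix ι ι ℝ} (hA : A.IsSymm) {g : ι → ℝ}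
    (hmin : IsMinOn (logisticObjective q y lam A) univ g) : logisticGrad q y lam A g = 0 := by
  -- differentiating along the gradient itself yields `∇Φ ⬝ᵥ ∇Φ = 0`
  set v := logisticGrad q y lam A g
  have hloc : IsLocalMin (fun t : ℝ => logisticObjective q y lam A (g + t • v)) 0 :=
    Eventually.of_forall fun t => by simpa using hmin (mem_univ (g + t • v))
  exact dotProduct_self_eq_zero.1
    (hloc.hasDerivAt_eq_zero (hasDerivAt_logisticObjective_line hA g v))

lemma logLossGrad_sub_dotProduct_nonneg (hq : ∀ a, 0 ≤ q a) (g h : ι → ℝ) :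
    0 ≤ (logLossGrad q y g - logLossGrad q y h) ⬝ᵥ (g - h) := by
  refine Finset.sum_nonneg fun a _ => ?_
  have hmono : 0 ≤ (logLoss' (y a * g a) - logLoss' (y a * h a)) * (y a * g a - y a * h a) := by
    rcases le_total (y a * g a) (y a * h a) with hle | hle
    · exact mul_nonneg_of_nonpos_of_nonpos (sub_nonpos.2 (monotone_logLoss' hle))
        (sub_nonpos.2 hle)
    · exact mul_nonneg (sub_nonneg.2 (monotone_logLoss' hle)) (sub_nonneg.2 hle)
  calc (0 : ℝ) ≤ q a * ((logLoss' (y a * g a) - logLoss' (y a * h a)) *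
        (y a * g a - y a * h a)) := mul_nonneg (hq a) hmono
    _ = _ := by simp only [logLossGrad, Pi.sub_apply]; ring

end Logistic

section MatrixAnalysis

open scoped Matrix.Norms.Operator

variable {α m n : Type*} [Fintype m] [Fintype n]

theorem Matrix.hasDerivWithinAt_of_entries {F : ℝ → Matrix m n ℝ} {F' : Matrix m n ℝ}
    {s : Set ℝ} {t : ℝ} (h : ∀ i j, HasDerivWithinAt (fun x => F x i j) (F' i j) s t) :
    HasDerivWithinAt F F' s t :=
  (ofLinearEquiv ℝ : (m → n → ℝ) ≃ₗ[ℝ] Matrix m n ℝ).toContinuousLinearEquiv.hasFDerivAt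
    |>.comp_hasDerivWithinAt t (hasDerivWithinAt_pi.2 fun i => hasDerivWithinAt_pi.2 (h i))

theorem Matrix.hasDerivWithinAt_inv [DecidableEq n] {F : ℝ → Matrix n n ℝ}
    {F' : Matrix n n ℝ} {s : Set ℝ} {t : ℝ} (h : HasDerivWithinAt F F' s t)
    (ht : IsUnit (F t)) :
    HasDerivWithinAt (fun x => (F x)⁻¹) (-((F t)⁻¹ * F' * (F t)⁻¹)) s t := by
  obtain ⟨u, hu⟩ := ht
  have hinv := hasFDerivAt_ringInverse (𝕜 := ℝ) u
  rw [← Ring.inverse_unit, hu] at hinv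
  simp only [nonsing_inv_eq_ringInverse]
  exact hinv.comp_hasDerivWithinAt t h

lemma Matrix.isBigO_mulVec (l : Filter α) (A : α → Matrix m n ℝ) (v : α → n → ℝ) :
    (fun x => A x *ᵥ v x) =O[l] fun x => ‖A x‖ * ‖v x‖ :=
  isBigO_of_le' (c := 1) l fun x => by
    rw [one_mul, norm_mul, norm_norm, norm_norm]
    exact linfty_opNorm_mulVec _ _

lemma Asymptotics.IsLittleO.const_mulVec {l : Filter α} {f : α → n → ℝ} {φ : α → ℝ}
    (h : f =o[l] φ) (M : Matrix m n ℝ) : (fun x => M *ᵥ f x) =o[l] φ :=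
  ((isBigO_mulVec l (fun _ => M) f).trans
    ((isBigO_refl f l).norm_left.const_mul_left _)).trans_isLittleO h

lemma abs_dotProduct_le (x z : n → ℝ) : |x ⬝ᵥ z| ≤ Fintype.card n * ‖x‖ * ‖z‖ := by
  calc |x ⬝ᵥ z| ≤ ∑ a, |x a * z a| := Finset.abs_sum_le_sum_abs _ _
    _ ≤ ∑ _a : n, ‖x‖ * ‖z‖ := Finset.sum_le_sum fun a _ => by
        rw [abs_mul]
        exact mul_le_mul (norm_le_pi_norm x a) (norm_le_pi_norm z a) (abs_nonneg _)
          (norm_nonneg _)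
    _ = _ := by simp [mul_assoc]

lemma Matrix.PosDef.exists_pos_mul_norm_sq_le {A : Matrix n n ℝ} (hA : A.PosDef) :
    ∃ c > 0, ∀ x : n → ℝ, c * ‖x‖ ^ 2 ≤ x ⬝ᵥ (A *ᵥ x) := by
  have hcont : Continuous fun x : n → ℝ => x ⬝ᵥ (A *ᵥ x) :=
    continuous_id.dotProduct (continuous_const.matrix_mulVec continuous_id)
  obtain ⟨c, hc, hmin⟩ := (isCompact_sphere (0 : n → ℝ) 1).exists_forall_le'
    hcont.continuousOn (a := 0) fun x hx => by
      simpa using hA.dotProduct_mulVec_pos (ne_zero_of_mem_unit_sphere ⟨x, hx⟩)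
  refine ⟨c, hc, fun x => ?_⟩
  rcases eq_or_ne x 0 with rfl | hx
  · simp
  have hx' : ‖x‖ ≠ 0 := norm_ne_zero_iff.2 hx
  have hu : ‖x‖⁻¹ • x ∈ Metric.sphere (0 : n → ℝ) 1 := by simp [norm_smul, hx']
  have := mul_le_mul_of_nonneg_left (hmin _ hu) (sq_nonneg ‖x‖)
  simp only [mulVec_smul, dotProduct_smul, smul_dotProduct, smul_eq_mul] at this
  calc c * ‖x‖ ^ 2 = ‖x‖ ^ 2 * c := mul_comm _ _
    _ ≤ ‖x‖ ^ 2 * (‖x‖⁻¹ * (‖x‖⁻¹ * (x ⬝ᵥ (A *ᵥ x)))) := this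
    _ = x ⬝ᵥ (A *ᵥ x) := by field_simp

end MatrixAnalysis

section Stability

open scoped Matrix.Norms.Operator

variable {ι α : Type*} [Fintype ι] {q y : ι → ℝ} {lam : ℝ}

lemma norm_sub_le_of_logisticGrad_eq_zero (hq : ∀ a, 0 ≤ q a) (hlam : 0 < lam)
    {A B : Matrix ι ι ℝ} {c : ℝ} (hc : ∀ x, c * ‖x‖ ^ 2 ≤ x ⬝ᵥ (A *ᵥ x))
    (hBA : Fintype.card ι * ‖B - A‖ ≤ c / 2) {g h : ι → ℝ}
    (hg : logisticGrad q y lam A g = 0) (hh : logisticGrad q y lam B h = 0) :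
    c * ‖h - g‖ ≤ 2 * Fintype.card ι * ‖B - A‖ * ‖g‖ := by
  set Δ := h - g
  have hsplit : logisticGrad q y lam B h - logisticGrad q y lam A g =
      (logLossGrad q y h - logLossGrad q y g) +
        lam • (A *ᵥ Δ + (B - A) *ᵥ Δ + (B - A) *ᵥ g) := by
    simp only [logisticGrad, Δ, mulVec_sub, sub_mulVec]
    module
  have hzero : 0 = (logLossGrad q y h - logLossGrad q y g) ⬝ᵥ Δ +
      lam * ((A *ᵥ Δ) ⬝ᵥ Δ + ((B - A) *ᵥ Δ) ⬝ᵥ Δ + ((B - A) *ᵥ g) ⬝ᵥ Δ) := by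
    rw [← add_dotProduct, ← add_dotProduct, ← smul_eq_mul, ← smul_dotProduct,
      ← add_dotProduct, ← hsplit, hg, hh, sub_zero, zero_dotProduct]
  have hloss : 0 ≤ (logLossGrad q y h - logLossGrad q y g) ⬝ᵥ Δ :=
    logLossGrad_sub_dotProduct_nonneg hq h g
  have hcoer : c * ‖Δ‖ ^ 2 ≤ (A *ᵥ Δ) ⬝ᵥ Δ := dotProduct_comm Δ _ ▸ hc Δ
  have hΔΔ : |((B - A) *ᵥ Δ) ⬝ᵥ Δ| ≤ Fintype.card ι * ‖B - A‖ * ‖Δ‖ ^ 2 :=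
    calc _ ≤ Fintype.card ι * ‖(B - A) *ᵥ Δ‖ * ‖Δ‖ := abs_dotProduct_le _ _
      _ ≤ Fintype.card ι * (‖B - A‖ * ‖Δ‖) * ‖Δ‖ := by gcongr; exact linfty_opNorm_mulVec _ _
      _ = _ := by ring
  have hgΔ : |((B - A) *ᵥ g) ⬝ᵥ Δ| ≤ Fintype.card ι * ‖B - A‖ * ‖g‖ * ‖Δ‖ :=
    calc _ ≤ Fintype.card ι * ‖(B - A) *ᵥ g‖ * ‖Δ‖ := abs_dotProduct_le _ _
      _ ≤ Fintype.card ι * (‖B - A‖ * ‖g‖) * ‖Δ‖ := by gcongr; exact linfty_opNorm_mulVec _ _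
      _ = _ := by ring
  have hsum : (A *ᵥ Δ) ⬝ᵥ Δ + ((B - A) *ᵥ Δ) ⬝ᵥ Δ + ((B - A) *ᵥ g) ⬝ᵥ Δ ≤ 0 :=
    le_of_mul_le_mul_left (by linarith) hlam
  have hquad : c / 2 * ‖Δ‖ ^ 2 ≤ Fintype.card ι * ‖B - A‖ * ‖g‖ * ‖Δ‖ := by
    nlinarith [abs_le.1 hΔΔ, abs_le.1 hgΔ, mul_le_mul_of_nonneg_right hBA (sq_nonneg ‖Δ‖)]
  rcases (norm_nonneg Δ).eq_or_lt with hΔ | hΔ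
  · rw [← hΔ, mul_zero]
    positivity
  · nlinarith

lemma isBigO_sub_of_logisticGrad_eq_zero {l : Filter α} (hq : ∀ a, 0 ≤ q a) (hlam : 0 < lam)
    {A : α → Matrix ι ι ℝ} {A₀ : Matrix ι ι ℝ} (hA₀ : A₀.PosDef) (hA : Tendsto A l (𝓝 A₀))
    {g : α → ι → ℝ} {g₀ : ι → ℝ} (hg₀ : logisticGrad q y lam A₀ g₀ = 0)
    (hg : ∀ᶠ x in l, logisticGrad q y lam (A x) (g x) = 0) :
    (fun x => g x - g₀) =O[l] fun x => A x - A₀ := by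
  obtain ⟨c, hc, hcoer⟩ := hA₀.exists_pos_mul_norm_sq_le
  have hsmall : ∀ᶠ x in l, Fintype.card ι * ‖A x - A₀‖ ≤ c / 2 := by
    have := (tendsto_iff_norm_sub_tendsto_zero.1 hA).const_mul (Fintype.card ι : ℝ)
    rw [mul_zero] at this
    exact this.eventually (eventually_le_nhds (by positivity))
  refine IsBigO.of_bound (2 * Fintype.card ι * ‖g₀‖ / c) ?_
  filter_upwards [hsmall, hg] with x hx hgx
  have := norm_sub_le_of_logisticGrad_eq_zero hq hlam hcoer hx hg₀ hgx
  rw [div_mul_eq_mul_div, le_div_iff₀ hc]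
  linarith

lemma isLittleO_logLossGrad_sub [DecidableEq ι] {l : Filter α} {g : α → ι → ℝ} {g₀ : ι → ℝ}
    {φ : α → ℝ} (hg : (fun x => g x - g₀) =O[l] φ) (hφ : Tendsto φ l (𝓝 0)) :
    (fun x => logLossGrad q y (g x) - logLossGrad q y g₀ -
      diagonal (fun a => q a * y a ^ 2 * logLoss'' (y a * g₀ a)) *ᵥ (g x - g₀)) =o[l] φ := by
  refine isLittleO_pi.2 fun a => ?_
  have hga : (fun x => y a * g x a - y a * g₀ a) =O[l] φ := by
    simpa [← mul_sub] using (isBigO_pi.1 hg a).const_mul_left (y a)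
  have htends : Tendsto (fun x => y a * g x a) l (𝓝 (y a * g₀ a)) :=
    tendsto_sub_nhds_zero_iff.1 (hga.trans_tendsto hφ)
  have := (((hasDerivAt_iff_isLittleO.1 (hasDerivAt_logLoss' (y a * g₀ a))).comp_tendsto
    htends).trans_isBigO hga).const_mul_left (q a * y a)
  refine this.congr_left fun x => ?_
  simp only [Function.comp_apply, smul_eq_mul, Pi.sub_apply, logLossGrad, mulVec_diagonal]
  ring

lemma logisticGrad_sub_logisticGrad [DecidableEq ι] (A B : Matrix ι ι ℝ) (g h : ι → ℝ) :
    logisticGrad q y lam B h - logisticGrad q y lam A g =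
      logisticHessian q y lam A g *ᵥ (h - g) +
        (logLossGrad q y h - logLossGrad q y g -
          diagonal (fun a => q a * y a ^ 2 * logLoss'' (y a * g a)) *ᵥ (h - g)) +
        lam • ((B - A) *ᵥ (h - g)) + lam • ((B - A) *ᵥ g) := by
  simp only [logisticGrad, logisticHessian, add_mulVec, sub_mulVec, mulVec_sub, smul_mulVec]
  module

theorem hasDerivWithinAt_of_logisticGrad_eq_zero [DecidableEq ι] (hq : ∀ a, 0 ≤ q a)
    (hlam : 0 < lam) {A : ℝ → Matrix ι ι ℝ} {A' : Matrix ι ι ℝ} {s : Set ℝ} {t : ℝ}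
    (hA : HasDerivWithinAt A A' s t) (hAt : (A t).PosDef) {g : ℝ → ι → ℝ}
    (hg : ∀ᶠ x in 𝓝[s] t, logisticGrad q y lam (A x) (g x) = 0) (ht : t ∈ s) :
    HasDerivWithinAt g
      (-lam • ((logisticHessian q y lam (A t) (g t))⁻¹ *ᵥ (A' *ᵥ g t))) s t := by
  set J := logisticHessian q y lam (A t) (g t) with hJdef
  set l := 𝓝[s] t
  have hφ : Tendsto (fun x => x - t) l (𝓝 0) :=
    tendsto_sub_nhds_zero_iff.2 (tendsto_nhdsWithin_of_tendsto_nhds tendsto_id)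
  have hgt := hg.self_of_nhdsWithin ht
  have hδA : (fun x => A x - A t) =O[l] fun x => x - t := HasFDerivWithinAt.isBigO_sub hA
  have hΔ : (fun x => g x - g t) =O[l] fun x => x - t :=
    (isBigO_sub_of_logisticGrad_eq_zero hq hlam hAt hA.continuousWithinAt hgt hg).trans hδA
  have hsq : (fun x => (x - t) * (x - t)) =o[l] fun x => x - t := by
    simpa using (isBigO_refl (fun x => x - t) l).mul_isLittleO ((isLittleO_one_iff ℝ).2 hφ)
  have hloss := isLittleO_logLossGrad_sub (q := q) (y := y) hΔ hφ
  have hcross : (fun x => (A x - A t) *ᵥ (g x - g t)) =o[l] fun x => x - t :=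
    ((isBigO_mulVec l _ _).trans (hδA.norm_left.mul hΔ.norm_left)).trans_isLittleO hsq
  have hlin : (fun x => (A x - A t - (x - t) • A') *ᵥ g t) =o[l] fun x => x - t :=
    (isBigO_mulVec l _ _).trans_isLittleO <| by
      simpa using (hasDerivWithinAt_iff_isLittleO.1 hA).norm_left.mul_isBigO
        (isBigO_const_one ℝ ‖g t‖ l)
  have hJ : J⁻¹ * J = 1 := nonsing_inv_mul _
    ((isUnit_iff_isUnit_det _).1 (posDef_logisticHessian hq hlam hAt _).isUnit)
  rw [hasDerivWithinAt_iff_isLittleO]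
  refine (((hloss.add (hcross.const_smul_left lam)).add (hlin.const_smul_left lam)).neg_left
    |>.const_mulVec J⁻¹).congr' ?_ EventuallyEq.rfl
  filter_upwards [hg] with x hgx
  have hlinearised : J *ᵥ (g x - g t) + (x - t) • lam • (A' *ᵥ g t) =
      -(logLossGrad q y (g x) - logLossGrad q y (g t) -
        diagonal (fun a => q a * y a ^ 2 * logLoss'' (y a * g t a)) *ᵥ (g x - g t) +
        lam • ((A x - A t) *ᵥ (g x - g t)) + lam • ((A x - A t - (x - t) • A') *ᵥ g t)) := by
    have hexp := logisticGrad_sub_logisticGrad (q := q) (y := y) (lam := lam)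
      (A t) (A x) (g t) (g x)
    rw [hgx, hgt, sub_zero, ← hJdef] at hexp
    simp only [sub_mulVec, smul_mulVec] at hexp ⊢
    linear_combination (norm := module) -hexp
  simp only [Pi.smul_apply]
  rw [← hlinearised, mulVec_add, mulVec_mulVec, hJ, one_mulVec, mulVec_smul, mulVec_smul]
  module

end Stability

theorem prompted_minimizer_right_derivative_general
    {r : ℕ}
    (N : Matrix (Fin r) (Fin r) ℝ) (hN : N.PosDef)
    (H : Matrix (Fin r) (Fin r) ℝ)
    (q : Fin r → ℝ) (hq0 : ∀ a, 0 < q a)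
    (y : Fin r → ℝ) (hy : ∀ a, y a = 1 ∨ y a = -1)
    (lam : ℝ) (hlam : 0 < lam)
    (Nmap : ℝ → Matrix (Fin r) (Fin r) ℝ)
    (hNmap0 : Nmap 0 = N)
    (hNmapExp : ∀ a b : Fin r,
      (fun η => Nmap η a b - (N a b + η * H a b)) =o[nhdsWithin 0 (Ioi 0)]
        (fun η => η))
    (g : ℝ → Fin r → ℝ)
    (hg : ∀ᶠ η in nhdsWithin 0 (Ici 0), (Nmap η).PosDef ∧
      IsMinOn (fun g' : Fin r → ℝ =>
        ∑ a, q a * logLoss (y a * g' a) +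
          (lam / 2) * (g' ⬝ᵥ ((Nmap η)⁻¹ *ᵥ g'))) univ (g η))
    (J₀ : Matrix (Fin r) (Fin r) ℝ)
    (hJ₀ : J₀ = Matrix.diagonal (fun a => q a * logLoss'' (y a * g 0 a)) +
      lam • N⁻¹) :
    HasDerivWithinAt g
      (lam • (J₀⁻¹ *ᵥ (N⁻¹ *ᵥ (H *ᵥ (N⁻¹ *ᵥ g 0))))) (Ici 0) 0 := by
  have hNmap : HasDerivWithinAt Nmap H (Ici 0) 0 :=
    hasDerivWithinAt_of_entries fun a b => hasDerivWithinAt_Ioi_iff_Ici.1 <|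
      hasDerivWithinAt_iff_isLittleO.2 <| by simpa [hNmap0, sub_sub] using hNmapExp a b
  have hstat : ∀ᶠ η in 𝓝[Ici 0] 0, logisticGrad q y lam (Nmap η)⁻¹ (g η) = 0 :=
    hg.mono fun η ⟨hpos, hmin⟩ =>
      hmin.logisticGrad_eq_zero (isHermitian_iff_isSymm.1 hpos.inv.isHermitian)
  have hJ : logisticHessian q y lam (Nmap 0)⁻¹ (g 0) = J₀ := by
    rw [hJ₀, hNmap0, logisticHessian]
    congr with a
    rcases hy a with h | h <;> simp [h]
  have := hasDerivWithinAt_of_logisticGrad_eq_zero (fun a => (hq0 a).le) hlam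
    (hasDerivWithinAt_inv hNmap (hNmap0 ▸ hN.isUnit)) (hNmap0 ▸ hN.inv) hstat self_mem_Ici
  rw [hJ, hNmap0] at this
  simpa [neg_mulVec, mulVec_neg, mulVec_mulVec, Matrix.mul_assoc] using this

/-- First-order value of abstract prompting: if `N_η = N + η·H + o(η)` as `η → 0⁺`,
then the ideal template minimizer `g_η` of
`Φ_η(g) = ∑ₐ q_a·ℓ(y_a·g_a) + (λ/2)·gᵀ N_η⁻¹ g` is right-differentiable at `η = 0`,
with derivative `λ·J₀⁻¹·N⁻¹·H·N⁻¹·g₀`, where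
`J₀ = diag(q_a·ℓ''(y_a·(g₀)_a)) + λ·N⁻¹`. -/
theorem prompted_minimizer_right_derivative
    {r : ℕ} (hr : 0 < r)
    (N : Matrix (Fin r) (Fin r) ℝ) (hN : N.PosDef)
    (H : Matrix (Fin r) (Fin r) ℝ) (hH : H.IsSymm)
    (q : Fin r → ℝ) (hq0 : ∀ a, 0 < q a) (hq1 : (∑ a, q a) = 1)
    (y : Fin r → ℝ) (hy : ∀ a, y a = 1 ∨ y a = -1)
    (lam : ℝ) (hlam : 0 < lam)
    (η₀ : ℝ) (hη₀ : 0 < η₀)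
    (Nmap : ℝ → Matrix (Fin r) (Fin r) ℝ)
    (hNmap0 : Nmap 0 = N)
    (hNmapSymm : ∀ η ∈ Ico (0:ℝ) η₀, (Nmap η).IsSymm)
    (hNmapExp : ∀ a b : Fin r,
      (fun η => Nmap η a b - (N a b + η * H a b)) =o[nhdsWithin 0 (Ioi 0)]
        (fun η => η))
    (g : ℝ → Fin r → ℝ)
    (hg : ∀ᶠ η in nhdsWithin 0 (Ici 0), (Nmap η).PosDef ∧
      IsMinOn (fun g' : Fin r → ℝ =>
        ∑ a, q a * logLoss (y a * g' a) +
          (lam / 2) * (g' ⬝ᵥ ((Nmap η)⁻¹ *ᵥ g'))) univ (g η))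
    (J₀ : Matrix (Fin r) (Fin r) ℝ)
    (hJ₀ : J₀ = Matrix.diagonal (fun a => q a * logLoss'' (y a * g 0 a)) +
      lam • N⁻¹) :
    HasDerivWithinAt g
      (lam • (J₀⁻¹ *ᵥ (N⁻¹ *ᵥ (H *ᵥ (N⁻¹ *ᵥ g 0))))) (Ici 0) 0 :=
  prompted_minimizer_right_derivative_general N hN H q hq0 y hy lam hlam Nmap hNmap0 hNmapExp g hg
    J₀ hJ₀
end
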